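/- Let G be a connected finite simple graph admitting an NLC-decomposition tree T of width w and depth d. Then G admits an NLC⁺-decomposition tree T₊ of width w and depth at most 2d; moreover T₊ can be chosen so that the color of each vertex of G in the colored graph produced at the root of T₊ equals its color in the colored graph produced at the root of T. -/

import Mathlib

def joinGraph {k : ℕ} {α β : Type*} (G₁ : SimpleGraph α) (G₂ : SimpleGraph β)
    (c₁ : α → Fin k) (c₂ : β → Fin k) (S : Set (Fin k × Fin k)) : SimpleGraph (α ⊕ β) where
  Adj x y :=
    match x, y with
    | Sum.inl a, Sum.inl b => G₁.Adj a b
    | Sum.inr a, Sum.inr b => G₂.Adj a b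
    | Sum.inl a, Sum.inr b => (c₁ a, c₂ b) ∈ S
    | Sum.inr b, Sum.inl a => (c₁ a, c₂ b) ∈ S
  symm := by
    constructor
    rintro (a | a) (b | b) h
    · exact h.symm
    · exact h
    · exact h
    · exact h.symm
  loopless := by
    constructor
    rintro (a | a) h
    · exact h.ne rfl
    · exact h.ne rfl


/-- The disjoint union of a family of graphs, on the sigma type. -/
def sigmaGraph {ι : Type*} {f : ι → Type*} (G : ∀ i, SimpleGraph (f i)) :
    SimpleGraph (Σ i, f i) where
  Adj x y := ∃ (i : ι) (a b : f i), (G i).Adj a b ∧ x = ⟨i, a⟩ ∧ y = ⟨i, b⟩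
  symm := by
    constructor
    rintro x y ⟨i, a, b, hab, rfl, rfl⟩
    exact ⟨i, b, a, hab.symm, rfl, rfl⟩
  loopless := by
    constructor
    rintro ⟨i, a⟩ ⟨i', a', b', hab, h1, h2⟩
    rw [h1] at h2
    injection h2 with h3 h4
    obtain rfl := h4
    exact hab.ne rfl

/-- NLC-decomposition trees of width `k`: leaves create colored vertices, internal nodes
have two ordered children, carry a set `S` of pairs of colors and an optional recoloring. -/
inductive NLCTree (k : ℕ) : Type
  | leaf (c : Fin k) : NLCTree k
  | node (S : Set (Fin k × Fin k)) (R : Option (Fin k → Fin k)) (l r : NLCTree k) : NLCTree k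

namespace NLCTree

variable {k : ℕ}

def V : NLCTree k → Type
  | leaf _ => Unit
  | node _ _ l r => l.V ⊕ r.V

def coloring : (t : NLCTree k) → t.V → Fin k
  | leaf c => fun _ => c
  | node _ R l r => fun v => (R.getD id) (Sum.elim l.coloring r.coloring v)

def graph : (t : NLCTree k) → SimpleGraph t.V
  | leaf _ => ⊥
  | node S _ l r => joinGraph l.graph r.graph l.coloring r.coloring S

/-- The depth of the tree: maximum number of edges on a root-to-leaf path. -/
def depth : NLCTree k → ℕ
  | leaf _ => 0
  | node _ _ l r => max l.depth r.depth + 1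

end NLCTree


/-- NLC⁺-decomposition trees of width `k`: leaves create colored vertices; `join` nodes have
two ordered children and carry a set `S` of pairs of colors and a recoloring `R`;
`par` nodes have an arbitrary (finite) number of children and produce a disjoint union. -/
inductive NLCPlusTree (k : ℕ) : Type
  | leaf (c : Fin k) : NLCPlusTree k
  | join (S : Set (Fin k × Fin k)) (R : Fin k → Fin k) (l r : NLCPlusTree k) : NLCPlusTree k
  | par (m : ℕ) (ts : Fin m → NLCPlusTree k) : NLCPlusTree k

namespace NLCPlusTree

variable {k : ℕ}

def V : NLCPlusTree k → Type
  | leaf _ => Unit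
  | join _ _ l r => l.V ⊕ r.V
  | par _ ts => Σ i, (ts i).V

def coloring : (t : NLCPlusTree k) → t.V → Fin k
  | leaf c => fun _ => c
  | join _ R l r => fun v => R (Sum.elim l.coloring r.coloring v)
  | par _ ts => fun v => (ts v.1).coloring v.2

def graph : (t : NLCPlusTree k) → SimpleGraph t.V
  | leaf _ => ⊥
  | join S _ l r => joinGraph l.graph r.graph l.coloring r.coloring S
  | par _ ts => sigmaGraph fun i => (ts i).graph

/-- Whether the root of the tree is a `par` (∥) node. -/
def isPar : NLCPlusTree k → Prop
  | par _ _ => True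
  | _ => False

/-- Validity of an NLC⁺-decomposition tree: every `par` node has at least two children,
no child of a `par` node is a `par` node (so every non-root `par` node has a `join`
parent), and the graph produced at every `join` node is connected. -/
def valid : NLCPlusTree k → Prop
  | leaf _ => True
  | join S _ l r =>
      l.valid ∧ r.valid ∧ (joinGraph l.graph r.graph l.coloring r.coloring S).Connected
  | par m ts => 2 ≤ m ∧ (∀ i, (ts i).valid) ∧ ∀ i, ¬ (ts i).isPar

/-- The depth of the tree: maximum number of edges on a root-to-leaf path. -/
def depth : NLCPlusTree k → ℕ
  | leaf _ => 0
  | join _ _ l r => max l.depth r.depth + 1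
  | par _ ts => (Finset.univ.sup fun i => (ts i).depth) + 1

end NLCPlusTree

/-!
Induct on the NLC-tree, keeping for every connected component of the graph built so far an
NLC⁺-tree without `∥` root, of at most twice the depth. A component of a join either lies on one
side, where it is a single component of that side and its tree is reused under the new recoloring,
or it meets both sides and is the join of the `∥`-union of the left components it contains with the
`∥`-union of the right ones, which costs two levels. The new `⋈` nodes are connected for free, since
they realize a connected component.
-/

open SimpleGraph

variable {k : ℕ}

section SigmaGraph

variable {ι : Type*} {f : ι → Type*} {G : ∀ i, SimpleGraph (f i)}

lemma sigmaGraph_adj_mk {i : ι} {a b : f i} :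
    (sigmaGraph G).Adj ⟨i, a⟩ ⟨i, b⟩ ↔ (G i).Adj a b := by
  constructor
  · rintro ⟨i', a', b', hab, h₁, h₂⟩
    cases h₁
    cases h₂
    exact hab
  · exact fun h => ⟨i, a, b, h, rfl, rfl⟩

lemma sigmaGraph_adj_fst {x y : Σ i, f i} (h : (sigmaGraph G).Adj x y) : x.1 = y.1 := by
  obtain ⟨i, a, b, -, rfl, rfl⟩ := h
  rfl

lemma sigmaGraph_reachable_fst {x y : Σ i, f i} (h : (sigmaGraph G).Reachable x y) :
    x.1 = y.1 := by
  obtain ⟨p⟩ := h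
  induction p with
  | nil => rfl
  | cons h _ ih => exact (sigmaGraph_adj_fst h).trans ih

lemma subsingleton_of_sigmaGraph_connected [∀ i, Nonempty (f i)]
    (h : (sigmaGraph G).Connected) : Subsingleton ι :=
  ⟨fun i j => sigmaGraph_reachable_fst
    (h.preconnected ⟨i, Classical.arbitrary _⟩ ⟨j, Classical.arbitrary _⟩)⟩

def sigmaGraphCongr {f' : ι → Type*} {G' : ∀ i, SimpleGraph (f' i)} (e : ∀ i, G i ≃g G' i) :
    sigmaGraph G ≃g sigmaGraph G' where
  toEquiv := Equiv.sigmaCongrRight fun i => (e i).toEquiv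
  map_rel_iff' := by
    rintro ⟨i, a⟩ ⟨j, b⟩
    constructor
    · intro h
      obtain rfl : i = j := sigmaGraph_adj_fst h
      exact sigmaGraph_adj_mk.2 ((e i).map_adj_iff.1 (sigmaGraph_adj_mk.1 h))
    · intro h
      obtain rfl : i = j := sigmaGraph_adj_fst h
      exact sigmaGraph_adj_mk.2 ((e i).map_adj_iff.2 (sigmaGraph_adj_mk.1 h))

def sigmaGraphReindex {κ : Type*} (e : κ ≃ ι) :
    sigmaGraph (fun j => G (e j)) ≃g sigmaGraph G where
  toEquiv := Equiv.sigmaCongrLeft e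
  map_rel_iff' := by
    rintro ⟨j, a⟩ ⟨j', b⟩
    change (sigmaGraph G).Adj ⟨e j, a⟩ ⟨e j', b⟩ ↔ _
    constructor
    · intro h
      obtain rfl : j = j' := e.injective (sigmaGraph_adj_fst h)
      rwa [sigmaGraph_adj_mk] at h ⊢
    · intro h
      obtain rfl : j = j' := sigmaGraph_adj_fst h
      rwa [sigmaGraph_adj_mk] at h ⊢

def sigmaGraphUniqueIso [Unique ι] : sigmaGraph G ≃g G default where
  toEquiv := Equiv.uniqueSigma f
  map_rel_iff' := by
    rintro ⟨i, a⟩ ⟨j, b⟩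
    obtain rfl := Unique.eq_default i
    obtain rfl := Unique.eq_default j
    exact sigmaGraph_adj_mk.symm

end SigmaGraph

section JoinGraph

variable {α β α' β' : Type*} {G₁ : SimpleGraph α} {G₂ : SimpleGraph β}
  {c₁ : α → Fin k} {c₂ : β → Fin k} {S : Set (Fin k × Fin k)}

def joinGraph.inlHom : G₁ →g joinGraph G₁ G₂ c₁ c₂ S := ⟨Sum.inl, id⟩

def joinGraph.inrHom : G₂ →g joinGraph G₁ G₂ c₁ c₂ S := ⟨Sum.inr, id⟩

def joinGraphCongr {G₁' : SimpleGraph α'} {G₂' : SimpleGraph β'} {c₁' : α' → Fin k}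
    {c₂' : β' → Fin k} (e₁ : G₁ ≃g G₁') (e₂ : G₂ ≃g G₂')
    (h₁ : ∀ a, c₁' (e₁ a) = c₁ a) (h₂ : ∀ b, c₂' (e₂ b) = c₂ b) :
    joinGraph G₁ G₂ c₁ c₂ S ≃g joinGraph G₁' G₂' c₁' c₂' S where
  toEquiv := Equiv.sumCongr e₁.toEquiv e₂.toEquiv
  map_rel_iff' := by
    rintro (a | b) (a' | b')
    · exact e₁.map_adj_iff
    · change (c₁' (e₁ a), c₂' (e₂ b')) ∈ S ↔ _
      rw [h₁, h₂]
      rfl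
    · change (c₁' (e₁ a'), c₂' (e₂ b)) ∈ S ↔ _
      rw [h₁, h₂]
      rfl
    · exact e₂.map_adj_iff

def joinGraphInduceIso (s : Set (α ⊕ β)) :
    (joinGraph G₁ G₂ c₁ c₂ S).induce s ≃g
      joinGraph (G₁.induce (Sum.inl ⁻¹' s)) (G₂.induce (Sum.inr ⁻¹' s))
        (fun a => c₁ a) (fun b => c₂ b) S where
  toEquiv := Equiv.subtypeSum
  map_rel_iff' := by rintro ⟨a | b, _⟩ ⟨a' | b', _⟩ <;> rfl

def joinGraphIsoOfIsEmptyRight [IsEmpty β] : joinGraph G₁ G₂ c₁ c₂ S ≃g G₁ where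
  toEquiv := Equiv.sumEmpty α β
  map_rel_iff' := by
    rintro (a | b) (a' | b')
    · rfl
    all_goals exact isEmptyElim ‹β›

def joinGraphIsoOfIsEmptyLeft [IsEmpty α] : joinGraph G₁ G₂ c₁ c₂ S ≃g G₂ where
  toEquiv := Equiv.emptySum α β
  map_rel_iff' := by
    rintro (a | b) (a' | b')
    iterate 3 exact isEmptyElim ‹α›
    rfl

end JoinGraph

def SimpleGraph.induceIsoSigmaComponents {α β : Type*} {G : SimpleGraph α} {H : SimpleGraph β}
    (f : G →g H) (C : H.ConnectedComponent) :
    G.induce (f ⁻¹' C.supp) ≃g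
      sigmaGraph fun D : {D : G.ConnectedComponent // D.map f = C} => G.induce D.1.supp :=
  RelIso.symm
    { toFun := fun ⟨⟨D, hD⟩, v, hv⟩ =>
        ⟨v, (ConnectedComponent.map_mk f v).symm.trans ((congrArg (·.map f) hv).trans hD)⟩
      invFun := fun v => ⟨⟨G.connectedComponentMk v, v.2⟩, ⟨v.1, rfl⟩⟩
      left_inv := by
        rintro ⟨⟨D, hD⟩, ⟨v, hv⟩⟩
        obtain rfl : G.connectedComponentMk v = D := hv
        rfl
      right_inv := fun _ => rfl
      map_rel_iff' := by
        rintro ⟨⟨D, hD⟩, ⟨a, ha⟩⟩ ⟨⟨D', hD'⟩, ⟨b, hb⟩⟩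
        change G.Adj a b ↔ _
        constructor
        · intro h
          obtain rfl : D = D' :=
            ha.symm.trans ((ConnectedComponent.connectedComponentMk_eq_of_adj h).trans hb)
          exact sigmaGraph_adj_mk.2 h
        · intro h
          obtain rfl : D = D' := congrArg Subtype.val (sigmaGraph_adj_fst h)
          rwa [sigmaGraph_adj_mk] at h }

namespace NLCPlusTree

def Realizes (t : NLCPlusTree k) {α : Type*} (G : SimpleGraph α) (c : α → Fin k) : Prop :=
  ∃ ψ : G ≃g t.graph, ∀ v, t.coloring (ψ v) = c v

section Realizes

variable {t : NLCPlusTree k} {α β α' : Type*} {G : SimpleGraph α} {c : α → Fin k}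

lemma Realizes.of_iso {G' : SimpleGraph α'} {c' : α' → Fin k} (h : t.Realizes G c)
    (e : G' ≃g G) (he : ∀ v, c (e v) = c' v) : t.Realizes G' c' := by
  obtain ⟨ψ, hψ⟩ := h
  exact ⟨e.trans ψ, fun v => (hψ (e v)).trans (he v)⟩

lemma Realizes.connected (h : t.Realizes G c) (hG : G.Connected) : t.graph.Connected := by
  obtain ⟨ψ, -⟩ := h
  exact ψ.connected_iff.mp hG

lemma realizes_join {l r : NLCPlusTree k} {G₁ : SimpleGraph α} {G₂ : SimpleGraph β}
    {c₁ : α → Fin k} {c₂ : β → Fin k} (S : Set (Fin k × Fin k)) (R : Fin k → Fin k)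
    (hl : l.Realizes G₁ c₁) (hr : r.Realizes G₂ c₂) :
    (join S R l r).Realizes (joinGraph G₁ G₂ c₁ c₂ S) (fun v => R (Sum.elim c₁ c₂ v)) := by
  obtain ⟨ψl, hψl⟩ := hl
  obtain ⟨ψr, hψr⟩ := hr
  refine ⟨joinGraphCongr ψl ψr hψl hψr, ?_⟩
  rintro (a | b)
  · exact congrArg R (hψl a)
  · exact congrArg R (hψr b)

lemma realizes_par {m : ℕ} {ts : Fin m → NLCPlusTree k} {f : Fin m → Type*}
    {G : ∀ i, SimpleGraph (f i)} {c : ∀ i, f i → Fin k} (h : ∀ i, (ts i).Realizes (G i) (c i)) :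
    (par m ts).Realizes (sigmaGraph G) (fun x => c x.1 x.2) := by
  choose ψ hψ using h
  exact ⟨sigmaGraphCongr ψ, fun x => hψ x.1 x.2⟩

def recolorTop (ρ : Fin k → Fin k) : NLCPlusTree k → NLCPlusTree k
  | leaf c => leaf (ρ c)
  | join S R l r => join S (fun x => ρ (R x)) l r
  | par m ts => par m ts

lemma valid_recolorTop {ρ : Fin k → Fin k} (h : t.valid) : (t.recolorTop ρ).valid := by
  cases t <;> exact h

lemma not_isPar_recolorTop {ρ : Fin k → Fin k} (h : ¬ t.isPar) : ¬ (t.recolorTop ρ).isPar := by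
  cases t <;> exact h

lemma depth_recolorTop (ρ : Fin k → Fin k) : (t.recolorTop ρ).depth = t.depth := by
  cases t <;> rfl

lemma Realizes.recolorTop (ρ : Fin k → Fin k) (hp : ¬ t.isPar) (h : t.Realizes G c) :
    (t.recolorTop ρ).Realizes G (fun v => ρ (c v)) := by
  obtain ⟨ψ, hψ⟩ := h
  cases t with
  | leaf => exact ⟨ψ, fun v => congrArg ρ (hψ v)⟩
  | join => exact ⟨ψ, fun v => congrArg ρ (hψ v)⟩
  | par => exact absurd trivial hp

lemma exists_realizes_sigmaGraph {ι : Type*} [Finite ι] [Nonempty ι] {f : ι → Type*}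
    {G : ∀ i, SimpleGraph (f i)} {c : ∀ i, f i → Fin k} {ts : ι → NLCPlusTree k} {d : ℕ}
    (hv : ∀ i, (ts i).valid) (hp : ∀ i, ¬ (ts i).isPar) (hd : ∀ i, (ts i).depth ≤ d)
    (h : ∀ i, (ts i).Realizes (G i) (c i)) :
    ∃ P : NLCPlusTree k, P.valid ∧ P.depth ≤ d + 1 ∧
      P.Realizes (sigmaGraph G) (fun x => c x.1 x.2) := by
  rcases subsingleton_or_nontrivial ι with hι | hι
  · have : Unique ι := uniqueOfSubsingleton (Classical.arbitrary ι)
    refine ⟨ts default, hv _, (hd _).trans d.le_succ, (h default).of_iso sigmaGraphUniqueIso ?_⟩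
    rintro ⟨i, a⟩
    obtain rfl := Unique.eq_default i
    rfl
  · have : Fintype ι := Fintype.ofFinite ι
    let e := (Fintype.equivFin ι).symm
    refine ⟨par _ fun j => ts (e j),
      ⟨Fintype.one_lt_card_iff_nontrivial.mpr hι, fun _ => hv _, fun _ => hp _⟩, ?_,
      (realizes_par fun j => h (e j)).of_iso (sigmaGraphReindex e).symm ?_⟩
    · exact Nat.succ_le_succ (Finset.sup_le fun j _ => hd _)
    · intro x
      obtain ⟨⟨j, a⟩, rfl⟩ := (sigmaGraphReindex (G := G) e).surjective x
      rw [RelIso.symm_apply_apply]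
      rfl

end Realizes

end NLCPlusTree

open NLCPlusTree

/-- The roots are required not to be `∥` nodes so that the recoloring of an enclosing join can be
pushed into them by `recolorTop`. -/
def HasComponentTrees {α : Type*} (G : SimpleGraph α) (c : α → Fin k) (d : ℕ) : Prop :=
  ∀ C : G.ConnectedComponent, ∃ t : NLCPlusTree k,
    t.valid ∧ ¬ t.isPar ∧ t.depth ≤ d ∧ t.Realizes (G.induce C.supp) (fun v => c v)

namespace HasComponentTrees

variable {α β γ : Type*} {G : SimpleGraph α} {c : α → Fin k} {d : ℕ}

lemma recolor (h : HasComponentTrees G c d) (ρ : Fin k → Fin k) :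
    HasComponentTrees G (fun v => ρ (c v)) d := by
  intro C
  obtain ⟨t, hv, hp, hd, ht⟩ := h C
  exact ⟨t.recolorTop ρ, valid_recolorTop hv, not_isPar_recolorTop hp,
    (depth_recolorTop ρ).trans_le hd, ht.recolorTop ρ hp⟩

lemma exists_realizes_par [Finite α] (h : HasComponentTrees G c d) {H : SimpleGraph γ}
    (f : G →g H) (C : H.ConnectedComponent) (hne : (f ⁻¹' C.supp).Nonempty) :
    ∃ P : NLCPlusTree k, P.valid ∧ P.depth ≤ d + 1 ∧
      P.Realizes (G.induce (f ⁻¹' C.supp)) (fun v => c v) := by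
  choose ts hv hp hd ht using h
  obtain ⟨a, ha⟩ := hne
  have : Nonempty {D : G.ConnectedComponent // D.map f = C} :=
    ⟨⟨_, (ConnectedComponent.map_mk f a).trans ha⟩⟩
  obtain ⟨P, hPv, hPd, hP⟩ := exists_realizes_sigmaGraph
    (ι := {D : G.ConnectedComponent // D.map f = C}) (fun D => hv D.1) (fun D => hp D.1)
    (fun D => hd D.1) (fun D => ht D.1)
  exact ⟨P, hPv, hPd, hP.of_iso (induceIsoSigmaComponents f C) fun _ => rfl⟩

/-- A connected union of components is a single component. -/
lemma exists_realizes_of_connected (h : HasComponentTrees G c d) {H : SimpleGraph γ}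
    (f : G →g H) (C : H.ConnectedComponent) (hconn : (G.induce (f ⁻¹' C.supp)).Connected) :
    ∃ t : NLCPlusTree k, t.valid ∧ ¬ t.isPar ∧ t.depth ≤ d ∧
      t.Realizes (G.induce (f ⁻¹' C.supp)) (fun v => c v) := by
  let e := induceIsoSigmaComponents f C
  have hσ := e.connected_iff.mp hconn
  have : ∀ D : {D : G.ConnectedComponent // D.map f = C}, Nonempty D.1.supp :=
    fun D => D.1.nonempty_supp.to_subtype
  have : Subsingleton {D : G.ConnectedComponent // D.map f = C} :=
    subsingleton_of_sigmaGraph_connected hσ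
  obtain ⟨⟨D₀, v⟩⟩ := hσ.nonempty
  let : Unique {D : G.ConnectedComponent // D.map f = C} := uniqueOfSubsingleton D₀
  obtain ⟨t, hv, hp, hd, ht⟩ := h D₀.1
  refine ⟨t, hv, hp, hd, ht.of_iso (e.trans sigmaGraphUniqueIso) ?_⟩
  intro x
  obtain ⟨y, rfl⟩ := (e.trans sigmaGraphUniqueIso).symm.surjective x
  rw [RelIso.apply_symm_apply]
  rfl

lemma joinGraph [Finite α] [Finite β] {G₁ : SimpleGraph α} {G₂ : SimpleGraph β}
    {c₁ : α → Fin k} {c₂ : β → Fin k} {d₁ d₂ : ℕ} (S : Set (Fin k × Fin k))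
    (h₁ : HasComponentTrees G₁ c₁ d₁) (h₂ : HasComponentTrees G₂ c₂ d₂) :
    HasComponentTrees (_root_.joinGraph G₁ G₂ c₁ c₂ S) (Sum.elim c₁ c₂) (max d₁ d₂ + 2) := by
  intro C
  have hC := C.connected_toSimpleGraph
  let e := joinGraphInduceIso (G₁ := G₁) (G₂ := G₂) (c₁ := c₁) (c₂ := c₂) (S := S) C.supp
  by_cases hA : (Sum.inl ⁻¹' C.supp).Nonempty
  · by_cases hB : (Sum.inr ⁻¹' C.supp).Nonempty
    · obtain ⟨PL, hLv, hLd, hL⟩ := h₁.exists_realizes_par _root_.joinGraph.inlHom C hA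
      obtain ⟨PR, hRv, hRd, hR⟩ := h₂.exists_realizes_par _root_.joinGraph.inrHom C hB
      have hJ : (join S id PL PR).Realizes ((_root_.joinGraph G₁ G₂ c₁ c₂ S).induce C.supp)
          (fun v => Sum.elim c₁ c₂ v) :=
        (realizes_join S id hL hR).of_iso e (by rintro ⟨a | b, _⟩ <;> rfl)
      refine ⟨join S id PL PR, ⟨hLv, hRv, hJ.connected hC⟩, not_false, ?_, hJ⟩
      change max PL.depth PR.depth + 1 ≤ _
      omega
    · have : IsEmpty (Sum.inr ⁻¹' C.supp) := ⟨fun b => hB ⟨b.1, b.2⟩⟩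
      let e₁ := e.trans joinGraphIsoOfIsEmptyRight
      obtain ⟨t, hv, hp, hd, ht⟩ :=
        h₁.exists_realizes_of_connected _root_.joinGraph.inlHom C ((Iso.connected_iff e₁).mp hC)
      refine ⟨t, hv, hp, by omega, ht.of_iso e₁ ?_⟩
      rintro ⟨a | b, h⟩
      · rfl
      · exact isEmptyElim (⟨b, h⟩ : Sum.inr ⁻¹' C.supp)
  · have : IsEmpty (Sum.inl ⁻¹' C.supp) := ⟨fun a => hA ⟨a.1, a.2⟩⟩
    let e₂ := e.trans joinGraphIsoOfIsEmptyLeft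
    obtain ⟨t, hv, hp, hd, ht⟩ :=
      h₂.exists_realizes_of_connected _root_.joinGraph.inrHom C ((Iso.connected_iff e₂).mp hC)
    refine ⟨t, hv, hp, by omega, ht.of_iso e₂ ?_⟩
    rintro ⟨a | b, h⟩
    · exact isEmptyElim (⟨a, h⟩ : Sum.inl ⁻¹' C.supp)
    · rfl

end HasComponentTrees

namespace NLCTree

instance finite_V : ∀ t : NLCTree k, Finite t.V
  | leaf _ => inferInstanceAs (Finite Unit)
  | node _ _ l r => have := finite_V l; have := finite_V r; inferInstanceAs (Finite (l.V ⊕ r.V))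

theorem hasComponentTrees : ∀ t : NLCTree k, HasComponentTrees t.graph t.coloring (2 * t.depth)
  | leaf c => by
    intro C
    have hC : ∀ v, v ∈ C.supp := fun _ => C.nonempty_supp.elim fun _ hu => hu
    exact ⟨.leaf c, trivial, not_false, le_rfl, ⟨Equiv.subtypeUnivEquiv hC, Iff.rfl⟩, fun _ => rfl⟩
  | node S R l r => by
    have h := ((hasComponentTrees l).joinGraph S (hasComponentTrees r)).recolor (R.getD id)
    rwa [show max (2 * l.depth) (2 * r.depth) + 2 = 2 * (node S R l r).depth by
      simp only [depth]; omega] at h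

end NLCTree

theorem NLC_to_NLCplus_decomposition_general
    (V : Type*) (G : SimpleGraph V) (hc : G.Connected)
    (w : ℕ) (T : NLCTree w) (φ : G ≃g T.graph) :
    ∃ (Tp : NLCPlusTree w), Tp.valid ∧ Tp.depth ≤ 2 * T.depth ∧
      ∃ ψ : G ≃g Tp.graph, ∀ v : V, Tp.coloring (ψ v) = T.coloring (φ v) := by
  have hT : T.graph.Connected := φ.connected_iff.mp hc
  obtain ⟨v₀⟩ := hT.nonempty
  have hC : ∀ v, v ∈ (T.graph.connectedComponentMk v₀).supp :=
    fun v => ConnectedComponent.sound (hT.preconnected v v₀)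
  obtain ⟨Tp, hv, -, hd, hTp⟩ := T.hasComponentTrees (T.graph.connectedComponentMk v₀)
  obtain ⟨ψ, hψ⟩ := hTp.of_iso (φ.trans ⟨(Equiv.subtypeUnivEquiv hC).symm, Iff.rfl⟩) fun _ => rfl
  exact ⟨Tp, hv, hd, ψ, hψ⟩

/-- If a connected graph `G` admits an NLC-decomposition tree `T` of width `w` and depth
`d`, then it admits an NLC⁺-decomposition tree of width `w` and depth at most `2·d`
which moreover gives every vertex of `G` the same color (at the root) as `T` does. -/
theorem NLC_to_NLCplus_decomposition
    (V : Type*) [Fintype V] (G : SimpleGraph V) (hc : G.Connected)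
    (w : ℕ) (T : NLCTree w) (φ : G ≃g T.graph) :
    ∃ (Tp : NLCPlusTree w), Tp.valid ∧ Tp.depth ≤ 2 * T.depth ∧
      ∃ ψ : G ≃g Tp.graph, ∀ v : V, Tp.coloring (ψ v) = T.coloring (φ v) :=
  NLC_to_NLCplus_decomposition_general V G hc w T φ
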